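/- Treating ξ and ξ̄ as independent complex variables, the polynomial Im-part condition for the tetrahedral charge 3 spectral curve, namely P(ξ,ξ̄) := (1−5√2ξ³−ξ⁶)²(2ξ+5√2ξ̄²−5√2ξξ̄³+2ξ̄⁵)³ − (1−5√2ξ̄³−ξ̄⁶)²(2ξ̄+5√2ξ²−5√2ξ̄ξ³+2ξ⁵)³, factorizes as P(ξ,ξ̄) = (ξ−ξ̄)(1+ξξ̄)³(ξ²+ξξ̄+ξ̄²)·h(ξ,ξ̄) for some polynomial h with real coefficients that is symmetric under swapping ξ and ξ̄. -/

import Mathlib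

/-!
Write `a(x) = 1 - 5√2 x³ - x⁶` and `b(x, y) = 2x + 5√2 y² - 5√2 x y³ + 2y⁵`, so that
`P = a(ξ)² b(ξ, ξ̄)³ - a(ξ̄)² b(ξ̄, ξ)³`. Both `a` and `b` are of the form `α + √2 β` with
`α, β` integral polynomials, and products of such expressions stay of that form because
`√2² = 2`; expanding this way splits the claimed factorization into two identities with integer
coefficients. The quotient is a polynomial in `ξξ̄` and `ξ³ + ξ̄³`, hence
symmetric.
-/

open MvPolynomial

/-- X = ξ and Y = ξ̄, treated as independent indeterminates over ℝ. -/
noncomputable def Xv : MvPolynomial (Fin 2) ℝ := MvPolynomial.X 0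
noncomputable def Yv : MvPolynomial (Fin 2) ℝ := MvPolynomial.X 1
noncomputable def s2 : MvPolynomial (Fin 2) ℝ := MvPolynomial.C (Real.sqrt 2)

/-- The cubed Lagrangian condition polynomial for the tetrahedral charge 3
spectral curve. -/
noncomputable def Ppoly : MvPolynomial (Fin 2) ℝ :=
  (1 - 5*s2*Xv^3 - Xv^6)^2 * (2*Xv + 5*s2*Yv^2 - 5*s2*Xv*Yv^3 + 2*Yv^5)^3
  - (1 - 5*s2*Yv^3 - Yv^6)^2 * (2*Yv + 5*s2*Xv^2 - 5*s2*Yv*Xv^3 + 2*Xv^5)^3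

section SqrtTwoArithmetic

variable {R : Type*} [CommRing R] {r : R}

theorem add_mul_mul_add_mul_of_sq_eq_two (hr : r ^ 2 = 2) (a b c d : R) :
    (a + r * b) * (c + r * d) = (a * c + 2 * b * d) + r * (a * d + b * c) := by
  linear_combination b * d * hr

theorem add_mul_sq_of_sq_eq_two (hr : r ^ 2 = 2) (a b : R) :
    (a + r * b) ^ 2 = (a ^ 2 + 2 * b ^ 2) + r * (2 * a * b) := by
  linear_combination b ^ 2 * hr

theorem add_mul_pow_three_of_sq_eq_two (hr : r ^ 2 = 2) (a b : R) :
    (a + r * b) ^ 3 = (a ^ 3 + 6 * a * b ^ 2) + r * (3 * a ^ 2 * b + 2 * b ^ 3) := by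
  linear_combination (3 * a * b ^ 2 + r * b ^ 3) * hr

end SqrtTwoArithmetic

section Tetrahedral

variable {R : Type*} [CommRing R]

def tetraA (r x : R) : R := 1 - 5*r*x^3 - x^6

def tetraB (r x y : R) : R := 2*x + 5*r*y^2 - 5*r*x*y^3 + 2*y^5

def tetraP (r x y : R) : R := tetraA r x ^ 2 * tetraB r x y ^ 3 - tetraA r y ^ 2 * tetraB r y x ^ 3

/-- The quotient `h`, written in terms of `u = ξξ̄` and `p = ξ³ + ξ̄³`. -/
def tetraQuot (r u p : R) : R :=
  (8 - 324*u + 324*u^2 + 5808*u^3 - 16848*u^4 + 16848*u^5 - 5808*u^6 - 324*u^7 + 324*u^8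
      - 8*u^9 + (84 + 324*u - 324*u^2 - 84*u^3) * p^2)
    + r * ((-330 + 1620*u - 1620*u^2 + 660*u^3 - 1620*u^4 + 1620*u^5 - 330*u^6) * p
      + 20 * p^3)

theorem tetraA_eq_add_mul (r x : R) : tetraA r x = (1 - x^6) + r * (-5*x^3) := by
  unfold tetraA; ring

theorem tetraB_eq_add_mul (r x y : R) : tetraB r x y = 2*(x + y^5) + r * (5*y^2*(1 - x*y)) := by
  unfold tetraB; ring

theorem tetraP_eq_mul_tetraQuot {r : R} (hr : r ^ 2 = 2) (x y : R) :
    tetraP r x y = (x - y) * (1 + x*y)^3 * (x^2 + x*y + y^2) * tetraQuot r (x*y) (x^3 + y^3) := by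
  simp only [tetraP, tetraA_eq_add_mul, tetraB_eq_add_mul, add_mul_sq_of_sq_eq_two hr,
    add_mul_pow_three_of_sq_eq_two hr, add_mul_mul_add_mul_of_sq_eq_two hr, tetraQuot]
  ring

theorem map_tetraQuot {S : Type*} [CommRing S] (f : R →+* S) (r u p : R) :
    f (tetraQuot r u p) = tetraQuot (f r) (f u) (f p) := by
  simp only [tetraQuot, map_add, map_sub, map_mul, map_pow, map_ofNat, map_neg]

end Tetrahedral

theorem s2_sq : s2 ^ 2 = 2 := by
  rw [s2, ← map_pow, Real.sq_sqrt zero_le_two, map_ofNat]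

/-- P(ξ,ξ̄) factorizes as (ξ−ξ̄)(1+ξξ̄)³(ξ²+ξξ̄+ξ̄²)·h(ξ,ξ̄) with h a real
polynomial symmetric under swapping ξ and ξ̄. -/
theorem stmt13 : ∃ h : MvPolynomial (Fin 2) ℝ,
    Ppoly = (Xv - Yv) * (1 + Xv*Yv)^3 * (Xv^2 + Xv*Yv + Yv^2) * h ∧
    MvPolynomial.rename (⇑(Equiv.swap (0 : Fin 2) 1)) h = h := by
  refine ⟨tetraQuot s2 (Xv*Yv) (Xv^3 + Yv^3), tetraP_eq_mul_tetraQuot s2_sq Xv Yv, ?_⟩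
  have hX : rename (Equiv.swap (0 : Fin 2) 1) Xv = Yv := by simp [Xv, Yv]
  have hY : rename (Equiv.swap (0 : Fin 2) 1) Yv = Xv := by simp [Xv, Yv]
  have hs2 : rename (Equiv.swap (0 : Fin 2) 1) s2 = s2 := rename_C _ _
  rw [← AlgHom.coe_toRingHom, map_tetraQuot]
  simp only [AlgHom.coe_toRingHom, map_mul, map_add, map_pow, hX, hY, hs2]
  rw [mul_comm Yv, add_comm (Yv ^ 3)]
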